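/- Let κ⁻ and κ⁺ be partitions, and set ℓ⁻ = ℓ(κ⁻), ℓ⁺ = ℓ(κ⁺). Suppose α and β are partitions that are (ℓ⁻, ℓ⁺)-large (meaning ℓ⁻=0 or ℓ⁺=0 or the (ℓ⁺, ℓ⁻) position lies in the Young diagram). Define the adjoin operation α ⊕ (κ⁻,κ⁺) = (α + κ⁺) ⊔ (κ⁻)'. Then α ⊴̇ β in the ℓ⁻-twisted dominance order if and only if α ⊕ (κ⁻,κ⁺) ⊴̇ β ⊕ (κ⁻,κ⁺). -/
import Mathlib

/-- A partition: a weakly decreasing sequence of naturals with finitely many nonzero parts.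
`f i` is the `(i+1)`-st part. -/
def IsPartition (f : ℕ → ℕ) : Prop :=
  (∀ i j, i ≤ j → f j ≤ f i) ∧ ∃ N, ∀ i, N ≤ i → f i = 0

/-- The conjugate partition: `conjFn f j` is the number of parts of `f` that are `> j`,
i.e. the length of column `j+1` of the Young diagram of `f`. -/
noncomputable def conjFn (f : ℕ → ℕ) (j : ℕ) : ℕ :=
  Set.ncard {i : ℕ | j < f i}

/-- The number of nonzero parts of `f`. -/
noncomputable def lenFn (f : ℕ → ℕ) : ℕ :=
  Set.ncard {i : ℕ | f i ≠ 0}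

/-- The size `|f|`: the number of boxes of the Young diagram of `f`. -/
noncomputable def sizeFn (f : ℕ → ℕ) : ℕ :=
  Set.ncard {p : ℕ × ℕ | p.2 < f p.1}

/-- The (extended) dominance order on sequences: all partial sums of `f` are at most
those of `g`. -/
def Dom (f g : ℕ → ℕ) : Prop :=
  ∀ k : ℕ, ∑ i ∈ Finset.range k, f i ≤ ∑ i ∈ Finset.range k, g i

/-- The negative part `σ⁻ = (σ'_1, …, σ'_l)` of the `l`-decomposition of `σ`. -/
noncomputable def minusPart (l : ℕ) (f : ℕ → ℕ) : ℕ → ℕ :=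
  fun i => if i < l then conjFn f i else 0

/-- The positive part `σ⁺ = σ - (σ⁻)'` of the `l`-decomposition of `σ`. -/
noncomputable def plusPart (l : ℕ) (f : ℕ → ℕ) : ℕ → ℕ :=
  fun i => f i - conjFn (minusPart l f) i

/-- The concatenation `(σ⁻_1, …, σ⁻_l, σ⁺_1, σ⁺_2, …)`. -/
noncomputable def concatParts (l : ℕ) (f : ℕ → ℕ) : ℕ → ℕ :=
  fun i => if i < l then minusPart l f i else plusPart l f (i - l)

/-- The `l`-twisted dominance order. -/
def TwistedDom (l : ℕ) (f g : ℕ → ℕ) : Prop :=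
  Dom (concatParts l f) (concatParts l g)

/-- `f` is `(lm, lp)`-large. -/
def IsLarge (lm lp : ℕ) (f : ℕ → ℕ) : Prop :=
  lm = 0 ∨ lp = 0 ∨ lm ≤ f (lp - 1)

/-! ### Auxiliary lemmas -/

lemma pncard_Iio (n : ℕ) : (Set.Iio n).ncard = n := by
  rw [← Finset.coe_range, Set.ncard_coe_finset, Finset.card_range]

lemma pncard_Iic (n : ℕ) : (Set.Iic n).ncard = n + 1 := by
  rw [← Finset.coe_Iic, Set.ncard_coe_finset, Nat.card_Iic]

lemma pncard_Ico (a b : ℕ) : (Set.Ico a b).ncard = b - a := by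
  rw [← Finset.coe_Ico, Set.ncard_coe_finset, Nat.card_Ico]

lemma finite_gt {f : ℕ → ℕ} (hf : IsPartition f) (j : ℕ) : {i : ℕ | j < f i}.Finite := by
  obtain ⟨N, hN⟩ := hf.2
  apply Set.Finite.subset (Set.finite_Iio N)
  intro i hi
  simp only [Set.mem_setOf_eq, Set.mem_Iio] at *
  by_contra h
  have := hN i (by omega); omega

/-- The Galois connection between a partition and its conjugate. -/
lemma galois {f : ℕ → ℕ} (hf : IsPartition f) (j i : ℕ) : j < f i ↔ i < conjFn f j := by
  constructor
  · intro h
    have hsub : Set.Iic i ⊆ {i' : ℕ | j < f i'} := by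
      intro x hx
      exact lt_of_lt_of_le h (hf.1 x i hx)
    have := Set.ncard_le_ncard hsub (finite_gt hf j)
    rw [pncard_Iic] at this
    unfold conjFn; omega
  · intro h
    by_contra hc
    push_neg at hc
    have hsub : {i' : ℕ | j < f i'} ⊆ Set.Iio i := by
      intro x hx
      simp only [Set.mem_setOf_eq] at hx
      simp only [Set.mem_Iio]
      by_contra hxi
      have := hf.1 i x (by omega)
      omega
    have := Set.ncard_le_ncard hsub (Set.finite_Iio i)
    rw [pncard_Iio] at this
    unfold conjFn at h; omega

lemma conj_conj {f : ℕ → ℕ} (hf : IsPartition f) (i : ℕ) : conjFn (conjFn f) i = f i := by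
  have hset : {j : ℕ | i < conjFn f j} = Set.Iio (f i) := by
    ext j
    simp only [Set.mem_setOf_eq, Set.mem_Iio]
    exact (galois hf j i).symm
  rw [conjFn, hset, pncard_Iio]

lemma lenFn_eq_conj {f : ℕ → ℕ} : lenFn f = conjFn f 0 := by
  unfold lenFn conjFn
  congr 1
  ext i
  simp [Nat.pos_iff_ne_zero]

lemma support_char {f : ℕ → ℕ} (hf : IsPartition f) (i : ℕ) : f i ≠ 0 ↔ i < lenFn f := by
  rw [lenFn_eq_conj, ← galois hf 0 i]
  omega

lemma conj_minusPart {f : ℕ → ℕ} (hf : IsPartition f) (l i : ℕ) :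
    conjFn (minusPart l f) i = min l (f i) := by
  have hset : {j : ℕ | i < minusPart l f j} = Set.Iio (min l (f i)) := by
    ext j
    simp only [Set.mem_setOf_eq, Set.mem_Iio, minusPart]
    constructor
    · intro h
      by_cases hj : j < l
      · rw [if_pos hj] at h
        have := (galois hf j i).mpr h
        omega
      · rw [if_neg hj] at h; omega
    · intro h
      rw [if_pos (by omega)]
      exact (galois hf j i).mp (by omega)
  rw [conjFn, hset, pncard_Iio]

lemma plusPart_eq {f : ℕ → ℕ} (hf : IsPartition f) (l i : ℕ) :
    plusPart l f i = f i - l := by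
  rw [plusPart, conj_minusPart hf]
  omega

lemma conj_vanish {f : ℕ → ℕ} {B j : ℕ} (hB : ∀ i, f i ≤ B) (hj : B ≤ j) : conjFn f j = 0 := by
  have hset : {i : ℕ | j < f i} = ∅ := by
    ext i; simp only [Set.mem_setOf_eq, Set.mem_empty_iff_false, iff_false]
    have := hB i; omega
  rw [conjFn, hset, Set.ncard_empty]

lemma conj_isPartition {f : ℕ → ℕ} (hf : IsPartition f) : IsPartition (conjFn f) := by
  constructor
  · intro j j' hjj'
    apply Set.ncard_le_ncard _ (finite_gt hf j)
    intro i hi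
    simp only [Set.mem_setOf_eq] at *
    omega
  · exact ⟨f 0, fun j hj => conj_vanish (fun i => hf.1 0 i (Nat.zero_le i)) hj⟩

lemma conj_step {f : ℕ → ℕ} (hfin : ∀ j, {i : ℕ | j < f i}.Finite) (j : ℕ) :
    conjFn f j = Set.ncard {i : ℕ | f i = j + 1} + conjFn f (j + 1) := by
  have hset : {i : ℕ | j < f i} = {i : ℕ | f i = j + 1} ∪ {i : ℕ | j + 1 < f i} := by
    ext i; simp only [Set.mem_setOf_eq, Set.mem_union]; omega
  have hdisj : Disjoint {i : ℕ | f i = j + 1} {i : ℕ | j + 1 < f i} := by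
    rw [Set.disjoint_left]
    intro i h1 h2
    simp only [Set.mem_setOf_eq] at *
    omega
  have h1 : {i : ℕ | f i = j + 1}.Finite := by
    apply (hfin j).subset
    intro i hi; simp only [Set.mem_setOf_eq] at *; omega
  rw [conjFn, hset, Set.ncard_union_eq hdisj h1 (hfin (j + 1))]
  rfl

lemma conj_eq_sum {f : ℕ → ℕ} (hfin : ∀ j, {i : ℕ | j < f i}.Finite) (j d : ℕ) :
    conjFn f j = (∑ m ∈ Finset.Ioc j (j + d), Set.ncard {i : ℕ | f i = m}) + conjFn f (j + d) := by
  induction d with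
  | zero => simp
  | succ d ih =>
    rw [ih, show j + (d + 1) = (j + d) + 1 by ring,
      Finset.sum_Ioc_succ_top (by omega), conj_step hfin (j + d)]
    ring

lemma conj_add {f g h : ℕ → ℕ}
    (hffin : ∀ j, {i : ℕ | j < f i}.Finite) (hgfin : ∀ j, {i : ℕ | j < g i}.Finite)
    (hhfin : ∀ j, {i : ℕ | j < h i}.Finite)
    {Bf Bg Bh : ℕ} (hBf : ∀ i, f i ≤ Bf) (hBg : ∀ i, g i ≤ Bg) (hBh : ∀ i, h i ≤ Bh)
    (hjoin : ∀ m : ℕ, 0 < m → Set.ncard {i : ℕ | f i = m} =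
      Set.ncard {i : ℕ | g i = m} + Set.ncard {i : ℕ | h i = m}) (j : ℕ) :
    conjFn f j = conjFn g j + conjFn h j := by
  set d := Bf + Bg + Bh with hd
  rw [conj_eq_sum hffin j d, conj_eq_sum hgfin j d, conj_eq_sum hhfin j d,
    conj_vanish hBf (by omega), conj_vanish hBg (by omega), conj_vanish hBh (by omega),
    add_zero, add_zero, add_zero, ← Finset.sum_add_distrib]
  apply Finset.sum_congr rfl
  intro m hm
  rw [Finset.mem_Ioc] at hm
  exact hjoin m (by omega)

lemma sum_concat {f : ℕ → ℕ} (hf : IsPartition f) (l k : ℕ) :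
    ∑ i ∈ Finset.range k, concatParts l f i =
      (∑ j ∈ Finset.range (min k l), conjFn f j) +
        ∑ i ∈ Finset.range (k - l), (f i - l) := by
  induction k with
  | zero => simp
  | succ k ih =>
    rw [Finset.sum_range_succ, ih]
    by_cases hkl : k < l
    · have h1 : min (k + 1) l = (min k l) + 1 := by omega
      have h2 : k + 1 - l = k - l := by omega
      rw [h1, h2, Finset.sum_range_succ]
      simp only [concatParts, minusPart, if_pos hkl]
      have h4 : min k l = k := by omega
      rw [h4]
      ring
    · have h1 : min (k + 1) l = min k l := by omega
      have h2 : k + 1 - l = (k - l) + 1 := by omega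
      rw [h1, h2, Finset.sum_range_succ]
      simp only [concatParts, if_neg hkl]
      rw [plusPart_eq hf]
      ring

/-- Master lemma: adjoining shifts all partial sums of the concatenation by a
constant depending only on `κm`, `κp` and the index. -/
lemma master_sum (κm κp γ γ' : ℕ → ℕ)
    (hκm : IsPartition κm) (hκp : IsPartition κp)
    (hγ : IsPartition γ) (hγ' : IsPartition γ')
    (hlarge : IsLarge (lenFn κm) (lenFn κp) γ)
    (hjoin : ∀ m : ℕ, 0 < m →
      Set.ncard {i : ℕ | γ' i = m} =
        Set.ncard {i : ℕ | γ i + κp i = m} + Set.ncard {i : ℕ | conjFn κm i = m})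
    (k : ℕ) :
    ∑ i ∈ Finset.range k, concatParts (lenFn κm) γ' i =
      (∑ i ∈ Finset.range k, concatParts (lenFn κm) γ i) +
        ((∑ j ∈ Finset.range (min k (lenFn κm)), κm j) +
          ∑ i ∈ Finset.range (k - lenFn κm), κp i) := by
  set l := lenFn κm with hl
  set g : ℕ → ℕ := fun i => γ i + κp i with hgdef
  have hg : IsPartition g := by
    constructor
    · intro i j hij
      exact Nat.add_le_add (hγ.1 i j hij) (hκp.1 i j hij)
    · obtain ⟨N1, h1⟩ := hγ.2
      obtain ⟨N2, h2⟩ := hκp.2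
      exact ⟨N1 + N2, fun i hi => by simp only [hgdef]; rw [h1 i (by omega), h2 i (by omega)]⟩
  -- largeness consequence
  have key0 : ∀ i, κp i ≠ 0 → l ≤ γ i := by
    intro i hi
    have hilp := (support_char hκp i).mp hi
    rcases hlarge with h | h | h
    · omega
    · omega
    · have := hγ.1 i (lenFn κp - 1) (by omega)
      omega
  -- conjugate additivity
  have key1 : ∀ j, conjFn γ' j = conjFn g j + κm j := by
    intro j
    have hc := conj_add (f := γ') (g := g) (h := conjFn κm)
      (finite_gt hγ') (finite_gt hg) (finite_gt (conj_isPartition hκm))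
      (Bf := γ' 0) (Bg := g 0) (Bh := conjFn κm 0)
      (fun i => hγ'.1 0 i (Nat.zero_le i)) (fun i => hg.1 0 i (Nat.zero_le i))
      (fun i => (conj_isPartition hκm).1 0 i (Nat.zero_le i))
      hjoin j
    rw [hc, conj_conj hκm j]
  have key2 : ∀ j, l ≤ j → conjFn γ' j = conjFn g j := by
    intro j hj
    have hκmj : κm j = 0 := by
      by_contra hc
      have := (support_char hκm j).mp hc
      omega
    rw [key1 j, hκmj, add_zero]
  have key3 : ∀ j, j < l → conjFn g j = conjFn γ j := by
    intro j hj
    unfold conjFn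
    congr 1
    ext i
    simp only [Set.mem_setOf_eq, hgdef]
    constructor
    · intro h
      by_contra hc
      push_neg at hc
      have hκpi : κp i ≠ 0 := by omega
      have := key0 i hκpi
      omega
    · intro h; omega
  have key4 : ∀ i, γ' i - l = g i - l := by
    intro i
    have hIco : Set.Ico l (γ' i) = Set.Ico l (g i) := by
      ext j
      simp only [Set.mem_Ico]
      constructor
      · rintro ⟨h1, h2⟩
        refine ⟨h1, (galois hg j i).mpr ?_⟩
        rw [← key2 j h1]
        exact (galois hγ' j i).mp h2
      · rintro ⟨h1, h2⟩
        refine ⟨h1, (galois hγ' j i).mpr ?_⟩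
        rw [key2 j h1]
        exact (galois hg j i).mp h2
    have e1 := pncard_Ico l (γ' i)
    have e2 := pncard_Ico l (g i)
    rw [hIco] at e1
    omega
  have key5 : ∀ i, g i - l = (γ i - l) + κp i := by
    intro i
    by_cases hc : κp i = 0
    · simp only [hgdef, hc]; omega
    · have := key0 i hc
      simp only [hgdef]; omega
  rw [sum_concat hγ' l k, sum_concat hγ l k]
  have A : ∑ j ∈ Finset.range (min k l), conjFn γ' j =
      ∑ j ∈ Finset.range (min k l), (conjFn γ j + κm j) := by
    apply Finset.sum_congr rfl
    intro j hj
    rw [Finset.mem_range] at hj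
    rw [key1 j, key3 j (by omega)]
  have B : ∑ i ∈ Finset.range (k - l), (γ' i - l) =
      ∑ i ∈ Finset.range (k - l), ((γ i - l) + κp i) := by
    apply Finset.sum_congr rfl
    intro i _
    rw [key4 i, key5 i]
  rw [A, B, Finset.sum_add_distrib, Finset.sum_add_distrib]
  ring

/-- Let `κ⁻`, `κ⁺` be partitions, `l = ℓ(κ⁻)`, `lp = ℓ(κ⁺)` and let
`α`, `β` be `(l, lp)`-large partitions of the same size.  Let `α' = α ⊕ (κ⁻,κ⁺)
= (α + κ⁺) ⊔ (κ⁻)'` and `β' = β ⊕ (κ⁻,κ⁺)` (joins characterised by multisets of nonzero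
parts).  Then `α ⊴̇ β` in the `l`-twisted dominance order iff `α' ⊴̇ β'`. -/
theorem adjoin_preserves_twisted_dominance (κm κp α β α' β' : ℕ → ℕ)
    (hκm : IsPartition κm) (hκp : IsPartition κp)
    (hα : IsPartition α) (hβ : IsPartition β)
    (hα' : IsPartition α') (hβ' : IsPartition β')
    (hsize : sizeFn α = sizeFn β)
    (hlargeα : IsLarge (lenFn κm) (lenFn κp) α)
    (hlargeβ : IsLarge (lenFn κm) (lenFn κp) β)
    (hjoinα : ∀ m : ℕ, 0 < m →
      Set.ncard {i : ℕ | α' i = m} =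
        Set.ncard {i : ℕ | α i + κp i = m} + Set.ncard {i : ℕ | conjFn κm i = m})
    (hjoinβ : ∀ m : ℕ, 0 < m →
      Set.ncard {i : ℕ | β' i = m} =
        Set.ncard {i : ℕ | β i + κp i = m} + Set.ncard {i : ℕ | conjFn κm i = m}) :
    TwistedDom (lenFn κm) α β ↔ TwistedDom (lenFn κm) α' β' := by
  have mα := master_sum κm κp α α' hκm hκp hα hα' hlargeα hjoinα
  have mβ := master_sum κm κp β β' hκm hκp hβ hβ' hlargeβ hjoinβ
  constructor
  · intro h k
    have h1 := h k
    have h2 := mα k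
    have h3 := mβ k
    omega
  · intro h k
    have h1 := h k
    have h2 := mα k
    have h3 := mβ k
    omega
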